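/- arXiv:1906.11613 — 2 statements merged into one kernel-verified Lean document; each statement's English description precedes it below -/
import Mathlib

section
/- (WAE convergence, special case D = D') Let χ and M be compact metric spaces, c₁ : χ → M and g₁ : M → χ locally Lipschitz, and AE = g₁ ∘ c₁. Let P_D be a Borel probability measure on χ and P_Z a compactly supported Borel probability measure on M. Then there exists b ≥ 0 such that W(P_D, g₁#P_Z) ≤ W(P_D, AE#P_D) + b·W(c₁#P_D, P_Z). -/
/-!
With `κ = AE#P_D = g₁#(c₁#P_D)`, the triangle inequality gives
`W(P_D, g₁#P_Z) ≤ W(P_D, κ) + W(g₁#(c₁#P_D), g₁#P_Z)`, and pushing couplings forward by the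
`b`-Lipschitz map `g₁` bounds the last term by `b·W(c₁#P_D, P_Z)`. The triangle inequality is the
gluing lemma: two couplings sharing a marginal are disintegrated along it and glued into a law of
three coordinates that are conditionally independent given the shared one.
-/

open MeasureTheory ENNReal NNReal

/-- The 1-Wasserstein distance, as the infimum over transference plans of the
expected (extended) distance. -/
noncomputable def wassersteinDist {X : Type*} [MeasurableSpace X] [PseudoEMetricSpace X]
    (μ ν : Measure X) : ℝ≥0∞ :=
  ⨅ γ ∈ {γ : Measure (X × X) | γ.map Prod.fst = μ ∧ γ.map Prod.snd = ν},
    ∫⁻ p, edist p.1 p.2 ∂γ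

open ProbabilityTheory

theorem LocallyLipschitz.exists_lipschitzWith_of_compactSpace {X Y : Type*} [PseudoMetricSpace X]
    [CompactSpace X] [PseudoMetricSpace Y] {f : X → Y} (hf : LocallyLipschitz f) :
    ∃ K, LipschitzWith K f := by
  obtain ⟨K, hK⟩ := (hf.locallyLipschitzOn (s := Set.univ)).exists_lipschitzOnWith_of_compact
    isCompact_univ
  exact ⟨K, lipschitzOnWith_univ.1 hK⟩

theorem wassersteinDist_le_lintegral_edist {X : Type*} [MeasurableSpace X] [PseudoEMetricSpace X]
    {μ ν : Measure X} {γ : Measure (X × X)}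
    (hμ : γ.map Prod.fst = μ) (hν : γ.map Prod.snd = ν) :
    wassersteinDist μ ν ≤ ∫⁻ p, edist p.1 p.2 ∂γ :=
  iInf₂_le γ ⟨hμ, hν⟩

namespace MeasureTheory.Measure

variable {X : Type*} [MeasurableSpace X] [StandardBorelSpace X] [Nonempty X]

/-- The law of `(y, x, z)` when `(x, y) ∼ γ₁` and `(y, z) ∼ γ₂` are conditionally independent
given `y`. -/
noncomputable def glue (γ₁ γ₂ : Measure (X × X)) [IsFiniteMeasure γ₁] [IsFiniteMeasure γ₂] :
    Measure (X × X × X) :=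
  γ₂.fst ⊗ₘ ((γ₁.map Prod.swap).condKernel ×ₖ γ₂.condKernel)

variable (γ₁ γ₂ : Measure (X × X)) [IsFiniteMeasure γ₁] [IsFiniteMeasure γ₂]

theorem glue_map_prodMap_fst (h : γ₁.map Prod.snd = γ₂.map Prod.fst) :
    (γ₁.glue γ₂).map (Prod.map id Prod.fst) = γ₁.map Prod.swap := by
  have hfst : (γ₁.map Prod.swap).fst = γ₂.fst := by
    rw [Measure.fst, Measure.map_map measurable_fst measurable_swap]
    exact h
  rw [glue, ← Measure.compProd_map measurable_fst, ← Kernel.fst_eq, Kernel.fst_prod, ← hfst]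
  exact (γ₁.map Prod.swap).disintegrate _

theorem glue_map_prodMap_snd : (γ₁.glue γ₂).map (Prod.map id Prod.snd) = γ₂ := by
  rw [glue, ← Measure.compProd_map measurable_snd, ← Kernel.snd_eq, Kernel.snd_prod]
  exact γ₂.disintegrate _

end MeasureTheory.Measure

section Gluing

variable {X : Type*} [PseudoEMetricSpace X] [PolishSpace X] [MeasurableSpace X] [BorelSpace X]

theorem exists_coupling_lintegral_edist_le_add [Nonempty X] {μ κ ν : Measure X}
    {γ₁ γ₂ : Measure (X × X)} [IsFiniteMeasure γ₁] [IsFiniteMeasure γ₂]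
    (h₁μ : γ₁.map Prod.fst = μ) (h₁κ : γ₁.map Prod.snd = κ)
    (h₂κ : γ₂.map Prod.fst = κ) (h₂ν : γ₂.map Prod.snd = ν) :
    ∃ γ : Measure (X × X), γ.map Prod.fst = μ ∧ γ.map Prod.snd = ν ∧
      ∫⁻ p, edist p.1 p.2 ∂γ ≤ ∫⁻ p, edist p.1 p.2 ∂γ₁ + ∫⁻ p, edist p.1 p.2 ∂γ₂ := by
  set π := γ₁.glue γ₂
  have hπ₁ : π.map (Prod.map id Prod.fst) = γ₁.map Prod.swap :=
    γ₁.glue_map_prodMap_fst γ₂ (h₁κ.trans h₂κ.symm)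
  have hπ₂ : π.map (Prod.map id Prod.snd) = γ₂ := γ₁.glue_map_prodMap_snd γ₂
  have hedist : Measurable fun p : X × X ↦ edist p.1 p.2 := measurable_edist
  refine ⟨π.map Prod.snd, ?_, ?_, ?_⟩
  · rw [Measure.map_map measurable_fst measurable_snd,
      show Prod.fst ∘ Prod.snd = Prod.snd ∘ Prod.map (id : X → X) Prod.fst from rfl,
      ← Measure.map_map measurable_snd (by fun_prop), hπ₁,
      Measure.map_map measurable_snd measurable_swap]
    exact h₁μ
  · rw [Measure.map_map measurable_snd measurable_snd,
      show Prod.snd ∘ Prod.snd = Prod.snd ∘ Prod.map (id : X → X) Prod.snd from rfl,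
      ← Measure.map_map measurable_snd (by fun_prop), hπ₂]
    exact h₂ν
  · have hcost₁ : ∫⁻ p, edist p.2.1 p.1 ∂π = ∫⁻ p, edist p.1 p.2 ∂γ₁ := by
      calc ∫⁻ p, edist p.2.1 p.1 ∂π
          = ∫⁻ q, edist q.2 q.1 ∂(π.map (Prod.map id Prod.fst)) :=
            (lintegral_map (f := fun q : X × X ↦ edist q.2 q.1) (by fun_prop)
              (measurable_id.prodMap measurable_fst)).symm
        _ = ∫⁻ p, edist p.1 p.2 ∂γ₁ := by
            rw [hπ₁, lintegral_map (by fun_prop) measurable_swap]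
            rfl
    have hcost₂ : ∫⁻ p, edist p.1 p.2.2 ∂π = ∫⁻ p, edist p.1 p.2 ∂γ₂ := by
      rw [← hπ₂, lintegral_map hedist (by fun_prop)]
      rfl
    calc ∫⁻ p, edist p.1 p.2 ∂(π.map Prod.snd)
        = ∫⁻ p, edist p.2.1 p.2.2 ∂π := lintegral_map hedist measurable_snd
      _ ≤ ∫⁻ p, (edist p.2.1 p.1 + edist p.1 p.2.2) ∂π :=
          lintegral_mono fun p ↦ edist_triangle _ _ _
      _ = ∫⁻ p, edist p.1 p.2 ∂γ₁ + ∫⁻ p, edist p.1 p.2 ∂γ₂ := by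
          rw [lintegral_add_left (by fun_prop), hcost₁, hcost₂]

theorem wassersteinDist_triangle (μ κ ν : Measure X) [IsFiniteMeasure κ] :
    wassersteinDist μ ν ≤ wassersteinDist μ κ + wassersteinDist κ ν := by
  rcases isEmpty_or_nonempty X with _ | _
  · exact (wassersteinDist_le_lintegral_edist (γ := 0) (Subsingleton.elim _ _)
      (Subsingleton.elim _ _)).trans (by simp)
  refine le_iInf₂_add_iInf₂ fun γ₁ ⟨h₁μ, h₁κ⟩ γ₂ ⟨h₂κ, h₂ν⟩ ↦ ?_
  have : IsFiniteMeasure γ₁ :=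
    (Measure.isFiniteMeasure_map_iff measurable_snd.aemeasurable).1 (h₁κ ▸ inferInstance)
  have : IsFiniteMeasure γ₂ :=
    (Measure.isFiniteMeasure_map_iff measurable_fst.aemeasurable).1 (h₂κ ▸ inferInstance)
  obtain ⟨γ, hμ, hν, hcost⟩ := exists_coupling_lintegral_edist_le_add h₁μ h₁κ h₂κ h₂ν
  exact (wassersteinDist_le_lintegral_edist hμ hν).trans hcost

end Gluing

theorem wassersteinDist_map_le_mul {X Y : Type*} [MeasurableSpace X] [PseudoEMetricSpace X]
    [MeasurableSpace Y] [PseudoEMetricSpace Y] {g : X → Y} {L : ℝ≥0} (hg : LipschitzWith L g)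
    (hgm : Measurable g) (μ ν : Measure X) [IsProbabilityMeasure μ] [IsProbabilityMeasure ν] :
    wassersteinDist (μ.map g) (ν.map g) ≤ L * wassersteinDist μ ν := by
  have hpush : ∀ γ : {γ : Measure (X × X) // γ.map Prod.fst = μ ∧ γ.map Prod.snd = ν},
      wassersteinDist (μ.map g) (ν.map g) ≤ L * ∫⁻ p, edist p.1 p.2 ∂(γ : Measure (X × X)) := by
    rintro ⟨γ, hμ, hν⟩
    have hgg : Measurable (Prod.map g g) := hgm.prodMap hgm
    have hμg : (γ.map (Prod.map g g)).map Prod.fst = μ.map g := by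
      rw [Measure.map_map measurable_fst hgg, ← hμ, Measure.map_map hgm measurable_fst]; rfl
    have hνg : (γ.map (Prod.map g g)).map Prod.snd = ν.map g := by
      rw [Measure.map_map measurable_snd hgg, ← hν, Measure.map_map hgm measurable_snd]; rfl
    calc wassersteinDist (μ.map g) (ν.map g)
        ≤ ∫⁻ p, edist p.1 p.2 ∂(γ.map (Prod.map g g)) :=
          wassersteinDist_le_lintegral_edist hμg hνg
      _ ≤ ∫⁻ p, edist (g p.1) (g p.2) ∂γ := lintegral_map_le _ _
      _ ≤ ∫⁻ p, L * edist p.1 p.2 ∂γ := lintegral_mono fun p ↦ hg.edist_le_mul _ _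
      _ = L * ∫⁻ p, edist p.1 p.2 ∂γ := lintegral_const_mul' _ _ coe_ne_top
  -- The product coupling makes the infimum nonempty, which matters when `L = 0`.
  have hne : Nonempty {γ : Measure (X × X) // γ.map Prod.fst = μ ∧ γ.map Prod.snd = ν} :=
    ⟨⟨μ.prod ν, by simp [Measure.map_fst_prod], by simp [Measure.map_snd_prod]⟩⟩
  calc wassersteinDist (μ.map g) (ν.map g)
      ≤ ⨅ γ : {γ : Measure (X × X) // γ.map Prod.fst = μ ∧ γ.map Prod.snd = ν},
          L * ∫⁻ p, edist p.1 p.2 ∂(γ : Measure (X × X)) := le_iInf hpush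
    _ = L * wassersteinDist μ ν := by
        rw [wassersteinDist, iInf_subtype']
        exact (ENNReal.mul_iInf' (by simp) fun _ ↦ hne).symm

theorem wae_convergence_general
    {χ M : Type*} [MetricSpace χ] [MeasurableSpace χ] [BorelSpace χ] [CompactSpace χ]
    [MetricSpace M] [MeasurableSpace M] [BorelSpace M] [CompactSpace M]
    (c₁ : χ → M) (g₁ : M → χ) (hc₁ : LocallyLipschitz c₁) (hg₁ : LocallyLipschitz g₁)
    (PD : Measure χ) [IsProbabilityMeasure PD]
    (PZ : Measure M) [IsProbabilityMeasure PZ] :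
    ∃ b : ℝ≥0,
      wassersteinDist PD (PZ.map g₁)
        ≤ wassersteinDist PD (PD.map (g₁ ∘ c₁))
          + b * wassersteinDist (PD.map c₁) PZ := by
  obtain ⟨b, hb⟩ := hg₁.exists_lipschitzWith_of_compactSpace
  have hgm : Measurable g₁ := hb.continuous.measurable
  have hcm : Measurable c₁ := hc₁.continuous.measurable
  have : IsProbabilityMeasure (PD.map c₁) := Measure.isProbabilityMeasure_map hcm.aemeasurable
  refine ⟨b, ?_⟩
  rw [← Measure.map_map hgm hcm]
  calc wassersteinDist PD (PZ.map g₁)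
      ≤ wassersteinDist PD ((PD.map c₁).map g₁)
        + wassersteinDist ((PD.map c₁).map g₁) (PZ.map g₁) := wassersteinDist_triangle _ _ _
    _ ≤ wassersteinDist PD ((PD.map c₁).map g₁) + b * wassersteinDist (PD.map c₁) PZ :=
        add_le_add_right (wassersteinDist_map_le_mul hb hgm _ _) _

/-- WAE convergence guarantee (special case D = D' of the
Mind2Mind theorem). -/
theorem wae_convergence
    {χ M : Type*} [MetricSpace χ] [MeasurableSpace χ] [BorelSpace χ] [CompactSpace χ]
    [MetricSpace M] [MeasurableSpace M] [BorelSpace M] [CompactSpace M]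
    (c₁ : χ → M) (g₁ : M → χ) (hc₁ : LocallyLipschitz c₁) (hg₁ : LocallyLipschitz g₁)
    (PD : Measure χ) [IsProbabilityMeasure PD]
    (PZ : Measure M) [IsProbabilityMeasure PZ]
    (hsupp : ∃ K : Set M, IsCompact K ∧ PZ Kᶜ = 0) :
    ∃ b : ℝ≥0,
      wassersteinDist PD (PZ.map g₁)
        ≤ wassersteinDist PD (PD.map (g₁ ∘ c₁))
          + b * wassersteinDist (PD.map c₁) PZ :=
  wae_convergence_general c₁ g₁ hc₁ hg₁ PD PZ
end

section
/- Let χ and M be compact metric spaces, c₁ : χ → M continuous, g₁ : M → χ Lipschitz with constant L. Let P and Q be Borel probability measures on χ. If g₁(c₁(x)) = x for all x ∈ support(P), then W(P, g₁#(c₁#Q)) ≤ (1 + L·Lip(c₁))·W(P, Q) whenever c₁ is Lipschitz with constant Lip(c₁). -/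
open MeasureTheory ENNReal NNReal

/-- The support of a Borel measure. -/
def measureSupport {X : Type*} [TopologicalSpace X] [MeasurableSpace X]
    (μ : Measure X) : Set X :=
  {x | ∀ U ∈ nhds x, μ U ≠ 0}

/-!
A compact metric space is second countable, so `P` is concentrated on its support, where the
autoencoder `f = g₁ ∘ c₁` is the identity; hence `f#P = P`. Pushing any transference plan between
`P` and `Q` forward by `f × f` gives one between `f#P = P` and `f#Q` whose cost is at most
`Lip(f) ≤ L·K` times the original one.
-/


lemma measureSupport_eq_support {X : Type*} [TopologicalSpace X] [MeasurableSpace X]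
    (μ : Measure X) : measureSupport μ = μ.support := by
  ext x
  simp only [Measure.mem_support_iff_forall, pos_iff_ne_zero]
  rfl

lemma ae_mem_measureSupport {X : Type*} [TopologicalSpace X] [HereditarilyLindelofSpace X]
    [MeasurableSpace X] (μ : Measure X) : ∀ᵐ x ∂μ, x ∈ measureSupport μ :=
  measureSupport_eq_support μ ▸ Measure.support_mem_ae

section Wasserstein

variable {X Y : Type*} [MeasurableSpace X] [PseudoEMetricSpace X]

lemma wassersteinDist_le_lintegral {μ ν : Measure X} {γ : Measure (X × X)}
    (h₁ : γ.map Prod.fst = μ) (h₂ : γ.map Prod.snd = ν) :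
    wassersteinDist μ ν ≤ ∫⁻ p, edist p.1 p.2 ∂γ :=
  iInf₂_le γ ⟨h₁, h₂⟩

variable [OpensMeasurableSpace X] [MeasurableSpace Y] [PseudoEMetricSpace Y] [BorelSpace Y]

lemma wassersteinDist_map_map_le {f : X → Y} {K : ℝ≥0} (hf : LipschitzWith K f) (hK : K ≠ 0)
    (μ ν : Measure X) :
    wassersteinDist (μ.map f) (ν.map f) ≤ K * wassersteinDist μ ν := by
  have hfm : Measurable f := hf.continuous.measurable
  have hff : Measurable (Prod.map f f) := hfm.prodMap hfm
  have hcoupling : ∀ γ : Measure (X × X), γ.map Prod.fst = μ → γ.map Prod.snd = ν →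
      wassersteinDist (μ.map f) (ν.map f) ≤ K * ∫⁻ p, edist p.1 p.2 ∂γ := by
    intro γ h₁ h₂
    calc wassersteinDist (μ.map f) (ν.map f)
        ≤ ∫⁻ q, edist q.1 q.2 ∂(γ.map (Prod.map f f)) := by
          refine wassersteinDist_le_lintegral ?_ ?_
          · rw [Measure.map_map measurable_fst hff, ← h₁, Measure.map_map hfm measurable_fst]
            rfl
          · rw [Measure.map_map measurable_snd hff, ← h₂, Measure.map_map hfm measurable_snd]
            rfl
      _ ≤ ∫⁻ p, edist (f p.1) (f p.2) ∂γ := lintegral_map_le _ _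
      _ ≤ ∫⁻ p, K * edist p.1 p.2 ∂γ := lintegral_mono fun p => hf.edist_le_mul p.1 p.2
      _ = K * ∫⁻ p, edist p.1 p.2 ∂γ := lintegral_const_mul' _ _ coe_ne_top
  have hK₀ : (K : ℝ≥0∞) ≠ 0 := coe_ne_zero.mpr hK
  conv_rhs => rw [wassersteinDist, mul_iInf_of_ne hK₀ coe_ne_top]
  refine le_iInf fun γ => ?_
  rw [mul_iInf_of_ne hK₀ coe_ne_top]
  exact le_iInf fun hγ => hcoupling γ hγ.1 hγ.2

end Wasserstein

theorem ideal_autoencoder_shift_general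
    {χ M : Type*} [MetricSpace χ] [MeasurableSpace χ] [BorelSpace χ] [CompactSpace χ]
    [MetricSpace M] [MeasurableSpace M] [BorelSpace M]
    (c₁ : χ → M) (g₁ : M → χ)
    (L K : ℝ≥0) (hg₁ : LipschitzWith L g₁) (hc₁ : LipschitzWith K c₁)
    (P Q : Measure χ)
    (hrec : ∀ x ∈ measureSupport P, g₁ (c₁ x) = x) :
    wassersteinDist P ((Q.map c₁).map g₁)
      ≤ (1 + L * K) * wassersteinDist P Q := by
  -- a nonzero constant is needed: with no coupling of `P` and `Q`, `0 * ∞ = 0` in `ℝ≥0∞`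
  have hf : LipschitzWith (1 + L * K) (g₁ ∘ c₁) := (hg₁.comp hc₁).weaken le_add_self
  have hP : P.map (g₁ ∘ c₁) = P := by
    rw [Measure.map_congr (g := id), Measure.map_id]
    filter_upwards [ae_mem_measureSupport P] with x hx using hrec x hx
  calc wassersteinDist P ((Q.map c₁).map g₁)
      = wassersteinDist (P.map (g₁ ∘ c₁)) (Q.map (g₁ ∘ c₁)) := by
        rw [hP, Measure.map_map hg₁.continuous.measurable hc₁.continuous.measurable]
    _ ≤ (1 + L * K : ℝ≥0) * wassersteinDist P Q :=
        wassersteinDist_map_map_le hf (by positivity) P Q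
    _ = (1 + L * K) * wassersteinDist P Q := by push_cast; rfl

/-- Ideal autoencoder case: if the autoencoder g₁ ∘ c₁ exactly
reconstructs the support of P, then the reconstruction error on Q is
controlled by the domain shift. -/
theorem ideal_autoencoder_shift
    {χ M : Type*} [MetricSpace χ] [MeasurableSpace χ] [BorelSpace χ] [CompactSpace χ]
    [MetricSpace M] [MeasurableSpace M] [BorelSpace M] [CompactSpace M]
    (c₁ : χ → M) (g₁ : M → χ) (hc₁cont : Continuous c₁)
    (L K : ℝ≥0) (hg₁ : LipschitzWith L g₁) (hc₁ : LipschitzWith K c₁)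
    (P Q : Measure χ) [IsProbabilityMeasure P] [IsProbabilityMeasure Q]
    (hrec : ∀ x ∈ measureSupport P, g₁ (c₁ x) = x) :
    wassersteinDist P ((Q.map c₁).map g₁)
      ≤ (1 + L * K) * wassersteinDist P Q :=
  ideal_autoencoder_shift_general c₁ g₁ L K hg₁ hc₁ P Q hrec
end
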